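/- arXiv:2301.01255 — 4 statements merged into one kernel-verified Lean document; each statement's English description precedes it below -/
import Mathlib

section
/- Let R be a commutative ring, V an R-module, m ≥ 1, Ω an alternating (m+1)-multilinear form on V, and g : V → V a linear endomorphism. Define the Lie derivative of Ω along g by (L_g Ω)(v₀, …, vₘ) := Σᵢ Ω(v₀, …, g vᵢ, …, vₘ) (sum over replacing each slot). If L_g Ω = 0 and x₁, …, xₘ ∈ V satisfy Ω(x₁, …, xₘ, v) = 0 for all v ∈ V, then for every v ∈ V, Σ_{i=1}^{m} Ω(x₁, …, g xᵢ, …, xₘ, v) = 0. (Pointwise linear-algebraic form of the claim that an infinitesimal Noether symmetry Y, i.e. L(Y)Ω = 0, satisfies [Y, ker^m Ω] ⊂ ker^m Ω and hence is an infinitesimal symmetry.) -/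
/-- Let `Ω` be an alternating `(m+1)`-multilinear form on an `R`-module `V` and `g : V → V` a
linear endomorphism.  The Lie derivative of `Ω` along `g` is
`(L_g Ω)(v₀, …, vₘ) := Σᵢ Ω(v₀, …, g vᵢ, …, vₘ)`.  If `L_g Ω = 0` and `x₁, …, xₘ` satisfy
`Ω(x₁, …, xₘ, v) = 0` for all `v`, then for every `v`,
`Σ_{i=1}^{m} Ω(x₁, …, g xᵢ, …, xₘ, v) = 0`.  (Pointwise form of: an infinitesimal Noether
symmetry `Y`, i.e. `L(Y)Ω = 0`, satisfies `[Y, ker^m Ω] ⊂ ker^m Ω`, hence is an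
infinitesimal symmetry.) -/
theorem infinitesimal_noether_symmetry_is_infinitesimal_symmetry
    {R : Type*} [CommRing R] {V : Type*} [AddCommGroup V] [Module R V]
    (m : ℕ) (hm : 1 ≤ m)
    (Ω : AlternatingMap R V R (Fin (m + 1)))
    (g : V →ₗ[R] V)
    (hg : ∀ w : Fin (m + 1) → V, ∑ i, Ω (Function.update w i (g (w i))) = 0)
    (x : Fin m → V)
    (hx : ∀ v : V, Ω (Fin.snoc x v) = 0) :
    ∀ v : V, ∑ i : Fin m, Ω (Fin.snoc (Function.update x i (g (x i))) v) = 0 := by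
  intro v
  have h := hg (Fin.snoc x v)
  rw [Fin.sum_univ_castSucc] at h
  simp only [Fin.snoc_castSucc, Fin.snoc_last, Fin.update_snoc_last, hx, add_zero] at h
  calc ∑ i : Fin m, Ω (Fin.snoc (Function.update x i (g (x i))) v)
      = ∑ i : Fin m, Ω (Function.update (Fin.snoc x v) i.castSucc (g (x i))) := by
        refine Finset.sum_congr rfl fun i _ => ?_
        rw [← Fin.snoc_update]
    _ = 0 := h
end

section
/- (Noether's theorem for internal symmetries, coordinate form.) Let L : ℝⁿ × (ℝⁿ)ᵐ → ℝ be C² (a first-order Lagrangian L(y, v) of n fields yⁱ and their m multivelocities vⁱ_μ), and let ξ : ℝⁿ → ℝⁿ be C¹. Assume the infinitesimal invariance condition: for all (y, v), Σᵢ (∂L/∂yⁱ)(y,v)·ξⁱ(y) + Σ_{i,μ} (∂L/∂vⁱ_μ)(y,v)·Σⱼ (∂ξⁱ/∂yʲ)(y)·vʲ_μ = 0. Let y : ℝᵐ → ℝⁿ be a C² solution of the Euler–Lagrange equations: for all x and i, (∂L/∂yⁱ)(y(x), ∂y(x)) = Σ_μ ∂/∂x^μ [(∂L/∂vⁱ_μ)(y(x),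 ∂y(x))], where ∂y(x) denotes the matrix (∂yⁱ/∂x^μ)(x). Then the Noether current jᵘ(x) := Σᵢ (∂L/∂vⁱ_μ)(y(x), ∂y(x))·ξⁱ(y(x)) is conserved: Σ_μ ∂jᵘ/∂x^μ (x) = 0 for all x. -/
/-!
Along a solution write `pᵢᵘ(x) = ∂L/∂vⁱ_μ(y(x), ∂y(x))`. The product rule splits `∂_μ jᵘ` into
`Σᵢ (Σ_μ ∂_μ pᵢᵘ) ξⁱ(y) + Σ_{i,μ} pᵢᵘ ∂_μ(ξⁱ ∘ y)`. The Euler–Lagrange equations turn the first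
sum into `Σᵢ ∂L/∂yⁱ ξⁱ(y)`, and the chain rule turns the second into
`Σ_{i,μ} pᵢᵘ Σⱼ ∂ⱼξⁱ(y) ∂_μ yʲ`; together they are the invariance condition evaluated at the jet
`(y(x), ∂y(x))`, hence zero.
-/

/-- Partial derivative of a first-order Lagrangian `L(y, v)` with respect to the field
value `yⁱ`, at the point `p = (y, v)`. -/
noncomputable def pdY (n m : ℕ) (L : (Fin n → ℝ) × (Fin n → Fin m → ℝ) → ℝ)
    (i : Fin n) (p : (Fin n → ℝ) × (Fin n → Fin m → ℝ)) : ℝ :=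
  fderiv ℝ L p (Pi.single i 1, 0)

/-- Partial derivative of a first-order Lagrangian `L(y, v)` with respect to the
multivelocity `vⁱ_μ`, at the point `p = (y, v)`. -/
noncomputable def pdV (n m : ℕ) (L : (Fin n → ℝ) × (Fin n → Fin m → ℝ) → ℝ)
    (i : Fin n) (μ : Fin m) (p : (Fin n → ℝ) × (Fin n → Fin m → ℝ)) : ℝ :=
  fderiv ℝ L p (0, Pi.single i (Pi.single μ 1))

/-- The matrix `∂y(x) = (∂yⁱ/∂x^μ)(x)` of spacetime derivatives of a field `y : ℝᵐ → ℝⁿ`. -/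
noncomputable def jet (n m : ℕ) (y : (Fin m → ℝ) → (Fin n → ℝ)) (x : Fin m → ℝ) :
    Fin n → Fin m → ℝ :=
  fun i μ => fderiv ℝ (fun x' => y x' i) x (Pi.single μ 1)

open Finset

lemma sum_fderiv_sum_mul {E ι κ : Type*} [NormedAddCommGroup E] [NormedSpace ℝ E]
    [Fintype ι] [Fintype κ] {P : ι → κ → E → ℝ} {Q : ι → E → ℝ} {x : E} (e : κ → E)
    (hP : ∀ i μ, DifferentiableAt ℝ (P i μ) x) (hQ : ∀ i, DifferentiableAt ℝ (Q i) x) :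
    ∑ μ, fderiv ℝ (fun x' => ∑ i, P i μ x' * Q i x') x (e μ)
      = ∑ i, (∑ μ, fderiv ℝ (P i μ) x (e μ)) * Q i x
        + ∑ i, ∑ μ, P i μ x * fderiv ℝ (Q i) x (e μ) := by
  have leibniz : ∀ μ, fderiv ℝ (fun x' => ∑ i, P i μ x' * Q i x') x (e μ)
      = ∑ i, (fderiv ℝ (P i μ) x (e μ) * Q i x + P i μ x * fderiv ℝ (Q i) x (e μ)) := by
    intro μ
    rw [fderiv_fun_sum fun i _ => (hP i μ).fun_mul (hQ i), _root_.sum_apply]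
    refine sum_congr rfl fun i _ => ?_
    rw [fderiv_fun_mul (hP i μ) (hQ i)]
    simp only [add_apply, smul_apply, smul_eq_mul]
    ring
  rw [sum_congr rfl fun μ _ => leibniz μ, sum_comm, ← sum_add_distrib]
  refine sum_congr rfl fun i _ => ?_
  rw [sum_add_distrib, sum_mul]

lemma jet_apply {n m : ℕ} {y : (Fin m → ℝ) → Fin n → ℝ} {x : Fin m → ℝ}
    (hy : DifferentiableAt ℝ y x) (i : Fin n) (μ : Fin m) :
    jet n m y x i μ = fderiv ℝ y x (Pi.single μ 1) i := by
  rw [jet, fderiv_apply hy i]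
  rfl

lemma fderiv_comp_apply_single {n m : ℕ} {g : (Fin n → ℝ) → ℝ}
    {y : (Fin m → ℝ) → Fin n → ℝ} {x : Fin m → ℝ}
    (hg : DifferentiableAt ℝ g (y x)) (hy : DifferentiableAt ℝ y x) (μ : Fin m) :
    fderiv ℝ (fun x' => g (y x')) x (Pi.single μ 1)
      = ∑ j, fderiv ℝ g (y x) (Pi.single j 1) * jet n m y x j μ := by
  rw [fderiv_fun_comp x hg hy, ContinuousLinearMap.comp_apply,
    ← ContinuousLinearMap.coe_coe, LinearMap.pi_apply_eq_sum_univ]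
  refine sum_congr rfl fun j _ => ?_
  rw [jet_apply hy, smul_eq_mul, mul_comm]
  congr 2
  ext k
  simp only [Pi.single_apply, eq_comm]

lemma ContDiff.jet {n m : ℕ} {k : WithTop ℕ∞} {y : (Fin m → ℝ) → Fin n → ℝ}
    (hy : ContDiff ℝ (k + 1) y) : ContDiff ℝ k (jet n m y) :=
  contDiff_pi.2 fun i => contDiff_pi.2 fun _ =>
    ((contDiff_pi.1 hy i).fderiv_right le_rfl).clm_apply contDiff_const

lemma ContDiff.pdV {n m : ℕ} {k : WithTop ℕ∞} {L : (Fin n → ℝ) × (Fin n → Fin m → ℝ) → ℝ}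
    (hL : ContDiff ℝ (k + 1) L) (i : Fin n) (μ : Fin m) : ContDiff ℝ k (pdV n m L i μ) :=
  (hL.fderiv_right le_rfl).clm_apply contDiff_const

/-- **Noether's theorem for internal symmetries, coordinate form.**
Let `L : ℝⁿ × (ℝⁿ)ᵐ → ℝ` be a C² first-order Lagrangian and `ξ : ℝⁿ → ℝⁿ` a C¹
infinitesimal internal symmetry:
`Σᵢ ∂L/∂yⁱ·ξⁱ(y) + Σ_{i,μ} ∂L/∂vⁱ_μ · Σⱼ ∂ξⁱ/∂yʲ(y)·vʲ_μ = 0` for all `(y,v)`.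
If `y : ℝᵐ → ℝⁿ` is a C² solution of the Euler–Lagrange equations, then the Noether
current `jᵘ(x) = Σᵢ ∂L/∂vⁱ_μ(y(x), ∂y(x))·ξⁱ(y(x))` is conserved: `Σ_μ ∂_μ jᵘ = 0`. -/
theorem noether_theorem_internal_symmetry
    (n m : ℕ)
    (L : (Fin n → ℝ) × (Fin n → Fin m → ℝ) → ℝ) (hL : ContDiff ℝ 2 L)
    (ξ : (Fin n → ℝ) → (Fin n → ℝ)) (hξ : ContDiff ℝ 1 ξ)
    (hinv : ∀ p : (Fin n → ℝ) × (Fin n → Fin m → ℝ),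
      (∑ i, pdY n m L i p * ξ p.1 i)
        + ∑ i, ∑ μ, pdV n m L i μ p *
            (∑ j, fderiv ℝ (fun y' => ξ y' i) p.1 (Pi.single j 1) * p.2 j μ) = 0)
    (y : (Fin m → ℝ) → (Fin n → ℝ)) (hy : ContDiff ℝ 2 y)
    (hEL : ∀ (x : Fin m → ℝ) (i : Fin n),
      pdY n m L i (y x, jet n m y x)
        = ∑ μ, fderiv ℝ (fun x' => pdV n m L i μ (y x', jet n m y x')) x (Pi.single μ 1)) :
    ∀ x : Fin m → ℝ,
      ∑ μ, fderiv ℝ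
          (fun x' => ∑ i, pdV n m L i μ (y x', jet n m y x') * ξ (y x') i)
          x (Pi.single μ 1) = 0 := by
  intro x
  have hy' : Differentiable ℝ y := hy.differentiable two_ne_zero
  have hξ' : ∀ i, Differentiable ℝ (fun y' => ξ y' i) :=
    fun i => (contDiff_pi.1 hξ i).differentiable one_ne_zero
  have hmomentum : ∀ i μ, DifferentiableAt ℝ (fun x' => pdV n m L i μ (y x', jet n m y x')) x :=
    fun i μ => (((hL.pdV (k := 1) i μ).comp ((hy.of_le one_le_two).prodMk hy.jet)).differentiable
      one_ne_zero) x
  rw [sum_fderiv_sum_mul (Q := fun i x' => ξ (y x') i) _ hmomentum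
    fun i => (hξ' i _).comp x (hy' x)]
  simp only [← hEL x, fderiv_comp_apply_single (hξ' _ _) (hy' x)]
  exact hinv (y x, jet n m y x)
end

section
/- Let T > 0, let G be a symmetric invertible n×n real matrix, let X be an n×2 real matrix, set g := Xᵀ G X with det g < 0, let P := −T·√(−det g)·g⁻¹·Xᵀ·G and Π := P·G⁻¹·Pᵀ. Then det Π = T⁴ · det g, and consequently (1/T)·√(−det Π) = T·√(−det g); i.e. the De Donder–Weyl Hamiltonian H = −(1/T)√(−det Π) pulls back under the Legendre map to the Lagrangian energy E_𝓛 = −T√(−det g) of the Nambu–Goto string. -/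
open Matrix

/-- The induced worldsheet metric `g = Xᵀ G X` of the bosonic string, where `G` is the
spacetime metric and `X` the matrix of multivelocities `x^μ_a`. -/
noncomputable def inducedMetric (n : ℕ) (G : Matrix (Fin n) (Fin n) ℝ)
    (X : Matrix (Fin n) (Fin 2) ℝ) : Matrix (Fin 2) (Fin 2) ℝ :=
  Xᵀ * G * X

/-- The image of the Nambu–Goto Legendre map: the multimomenta
`p^a_μ = −T·√(−det g)·G_{μν} g^{ba} x^ν_b`, i.e. `P = −T·√(−det g)·g⁻¹·Xᵀ·G`. -/
noncomputable def ngMomenta (n : ℕ) (T : ℝ) (G : Matrix (Fin n) (Fin n) ℝ)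
    (X : Matrix (Fin n) (Fin 2) ℝ) : Matrix (Fin 2) (Fin n) ℝ :=
  (-T * Real.sqrt (-(inducedMetric n G X).det)) • ((inducedMetric n G X)⁻¹ * Xᵀ * G)

/-- The matrix `Π^{ab} = G^{μν} p^a_μ p^b_ν`, i.e. `Π = P·G⁻¹·Pᵀ`. -/
noncomputable def ngPi (n : ℕ) (T : ℝ) (G : Matrix (Fin n) (Fin n) ℝ)
    (X : Matrix (Fin n) (Fin 2) ℝ) : Matrix (Fin 2) (Fin 2) ℝ :=
  ngMomenta n T G X * G⁻¹ * (ngMomenta n T G X)ᵀ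

/-!
The Legendre map is `P = c · g⁻¹ Xᵀ G` with `c = −T√(−det g)`, so
`Π = c² · g⁻¹ (Xᵀ Gᵀ X) g⁻ᵀ = c² · g⁻¹ gᵀ g⁻ᵀ = c² g⁻¹`, where `c² = T²·(−det g)`.
On the 2-dimensional worldsheet `det (c² g⁻¹) = c⁴ / det g = T⁴ det g`, and taking
square roots gives `√(−det Π) = T² √(−det g)`.
-/

namespace Matrix

variable {m n α : Type*} [Fintype m] [DecidableEq m] [Fintype n] [DecidableEq n]

theorem inv_mul_transpose_mul_mul_inv_mul_transpose_eq_inv [CommRing α]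
    (G : Matrix n n α) (X : Matrix n m α) (hG : IsUnit G.det)
    (hg : IsUnit (Xᵀ * G * X).det) :
    (Xᵀ * G * X)⁻¹ * Xᵀ * G * G⁻¹ * ((Xᵀ * G * X)⁻¹ * Xᵀ * G)ᵀ = (Xᵀ * G * X)⁻¹ := by
  set g := Xᵀ * G * X
  have hgt : gᵀ = Xᵀ * Gᵀ * X := by simp [g, Matrix.mul_assoc]
  have hgt_unit : IsUnit gᵀ.det := by rwa [det_transpose]
  calc g⁻¹ * Xᵀ * G * G⁻¹ * (g⁻¹ * Xᵀ * G)ᵀ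
      = g⁻¹ * Xᵀ * (G * G⁻¹) * Gᵀ * X * gᵀ⁻¹ := by
        simp only [transpose_mul, transpose_transpose, transpose_nonsing_inv, Matrix.mul_assoc]
    _ = g⁻¹ * gᵀ * gᵀ⁻¹ := by
        rw [mul_nonsing_inv _ hG, Matrix.mul_one, hgt]
        simp only [Matrix.mul_assoc]
    _ = g⁻¹ := by rw [Matrix.mul_assoc, mul_nonsing_inv _ hgt_unit, Matrix.mul_one]

theorem det_smul_inv [Field α] (a : α) (A : Matrix m m α) :
    (a • A⁻¹).det = a ^ Fintype.card m / A.det := by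
  rw [det_smul, det_nonsing_inv, Ring.inverse_eq_inv, div_eq_mul_inv]

end Matrix

theorem ngPi_eq_smul_inv (n : ℕ) (T : ℝ) (G : Matrix (Fin n) (Fin n) ℝ)
    (hG : IsUnit G.det) (X : Matrix (Fin n) (Fin 2) ℝ)
    (hg : (inducedMetric n G X).det < 0) :
    ngPi n T G X = (T ^ 2 * -(inducedMetric n G X).det) • (inducedMetric n G X)⁻¹ := by
  have hg_unit : IsUnit (inducedMetric n G X).det := hg.ne.isUnit
  have hc : (-T * √(-(inducedMetric n G X).det)) ^ 2 = T ^ 2 * -(inducedMetric n G X).det := by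
    rw [neg_mul, neg_sq, mul_pow, Real.sq_sqrt (by linarith)]
  rw [ngPi, ngMomenta, transpose_smul, smul_mul, smul_mul, Matrix.mul_smul, smul_smul, ← sq, hc,
    inducedMetric, Matrix.inv_mul_transpose_mul_mul_inv_mul_transpose_eq_inv G X hG hg_unit]

theorem one_div_mul_sqrt_pow_four_mul (T x : ℝ) : 1 / T * √(T ^ 4 * x) = T * √x := by
  have hT4 : T ^ 4 = (T ^ 2) ^ 2 := by ring
  rw [hT4, Real.sqrt_mul (by positivity), Real.sqrt_sq (sq_nonneg T), ← mul_assoc, one_div,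
    inv_mul_eq_div, sq, mul_self_div_self]

theorem ngPi_det_and_hamiltonian_general
    (n : ℕ) (T : ℝ)
    (G : Matrix (Fin n) (Fin n) ℝ) (hG : IsUnit G.det)
    (X : Matrix (Fin n) (Fin 2) ℝ)
    (hg : (inducedMetric n G X).det < 0) :
    (ngPi n T G X).det = T ^ 4 * (inducedMetric n G X).det ∧
    (1 / T) * Real.sqrt (-(ngPi n T G X).det)
      = T * Real.sqrt (-(inducedMetric n G X).det) := by
  have hdet : (ngPi n T G X).det = T ^ 4 * (inducedMetric n G X).det := by
    rw [ngPi_eq_smul_inv n T G hG X hg, Matrix.det_smul_inv, Fintype.card_fin]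
    field_simp [hg.ne]
  refine ⟨hdet, ?_⟩
  rw [hdet, ← mul_neg, one_div_mul_sqrt_pow_four_mul]

/-- For the Nambu–Goto string (tension `T > 0`, symmetric invertible spacetime metric `G`,
multivelocities `X`, induced metric `g = Xᵀ G X` with `det g < 0`, multimomenta
`P = −T·√(−det g)·g⁻¹·Xᵀ·G`, `Π = P·G⁻¹·Pᵀ`), one has `det Π = T⁴·det g`, and
consequently `(1/T)·√(−det Π) = T·√(−det g)`: the De Donder–Weyl Hamiltonian
`H = −(1/T)√(−det Π)` pulls back under the Legendre map to the Lagrangian energy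
`E_𝓛 = −T√(−det g)`. -/
theorem ngPi_det_and_hamiltonian
    (n : ℕ) (T : ℝ) (hT : 0 < T)
    (G : Matrix (Fin n) (Fin n) ℝ) (hGsymm : G.IsSymm) (hG : IsUnit G.det)
    (X : Matrix (Fin n) (Fin 2) ℝ)
    (hg : (inducedMetric n G X).det < 0) :
    (ngPi n T G X).det = T ^ 4 * (inducedMetric n G X).det ∧
    (1 / T) * Real.sqrt (-(ngPi n T G X).det)
      = T * Real.sqrt (-(inducedMetric n G X).det) :=
  ngPi_det_and_hamiltonian_general n T G hG X hg
end

section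
/- (Magnetic Carrollian scalar field theory under a finite Carroll boost.) Let d ≥ 1, b ∈ ℝ^d, and let C_b be the invertible linear map of ℝ^{1+d} with (C_b x)₀ = x₀ + Σᵢ bᵢ xᵢ and (C_b x)ᵢ = xᵢ (a Carroll boost). For smooth φ, π : ℝ^{1+d} → ℝ define the transformed fields φ′ := φ ∘ C_b⁻¹ and π′(x) := π(C_b⁻¹ x) − Σᵢ bᵢ (∂ᵢφ)(C_b⁻¹ x). Then, with L[φ, π] := π·∂₀φ − ½ Σᵢ (∂ᵢφ)², one has for every x: L[φ′, π′](x) = L[φ, π](C_b⁻¹ x) − ½ |b|² (∂₀φ(C_b⁻¹ x))². In particular the discrepancy is quadratic in b, so the magnetic Carrollian Lagrangian is invariant to first order in b (the infinitesimal Carroll boost is a symmetry). -/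
/-- **Magnetic Carrollian scalar field theory under a finite Carroll
boost.**
Let `C_b` be the invertible linear Carroll boost of `ℝ^{1+d}`:
`(C_b x)₀ = x₀ + Σᵢ bᵢ xᵢ`, `(C_b x)ᵢ = xᵢ`.  For smooth fields `φ, π` with transformed
fields `φ′ = φ ∘ C_b⁻¹` and `π′(x) = π(C_b⁻¹ x) − Σᵢ bᵢ (∂ᵢφ)(C_b⁻¹ x)`, the magnetic
Carrollian Lagrangian `L[φ, π] = π·∂₀φ − ½ Σᵢ (∂ᵢφ)²` satisfies
`L[φ′, π′](x) = L[φ, π](C_b⁻¹ x) − ½ |b|² (∂₀φ(C_b⁻¹ x))²`;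
in particular the discrepancy is quadratic in `b`, so the Lagrangian is invariant to
first order in `b`. -/
theorem magnetic_carroll_boost
    (d : ℕ) (hd : 1 ≤ d) (b : Fin d → ℝ)
    (C : (Fin (d + 1) → ℝ) ≃ₗ[ℝ] (Fin (d + 1) → ℝ))
    (hC0 : ∀ x : Fin (d + 1) → ℝ, C x 0 = x 0 + ∑ i : Fin d, b i * x i.succ)
    (hCi : ∀ (x : Fin (d + 1) → ℝ) (i : Fin d), C x i.succ = x i.succ)
    (φ π : (Fin (d + 1) → ℝ) → ℝ) (hφ : ContDiff ℝ (⊤ : ℕ∞) φ) (hπ : ContDiff ℝ (⊤ : ℕ∞) π) :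
    ∀ x : Fin (d + 1) → ℝ,
      (π (C.symm x) - ∑ i : Fin d, b i * fderiv ℝ φ (C.symm x) (Pi.single i.succ 1))
            * fderiv ℝ (φ ∘ ⇑C.symm) x (Pi.single 0 1)
          - (1 / 2) * ∑ i : Fin d, (fderiv ℝ (φ ∘ ⇑C.symm) x (Pi.single i.succ 1)) ^ 2
        = (π (C.symm x) * fderiv ℝ φ (C.symm x) (Pi.single 0 1)
            - (1 / 2) * ∑ i : Fin d, (fderiv ℝ φ (C.symm x) (Pi.single i.succ 1)) ^ 2)
          - (1 / 2) * (∑ i : Fin d, (b i) ^ 2)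
              * (fderiv ℝ φ (C.symm x) (Pi.single 0 1)) ^ 2 := by
  intro x
  -- C.symm as a continuous linear map
  set T : (Fin (d + 1) → ℝ) →L[ℝ] (Fin (d + 1) → ℝ) :=
    C.symm.toLinearMap.toContinuousLinearMap with hT
  have hTc : ⇑T = ⇑C.symm := by
    simp [hT]
  -- chain rule
  have hchain : ∀ v, fderiv ℝ (φ ∘ ⇑C.symm) x v = fderiv ℝ φ (C.symm x) (C.symm v) := by
    intro v
    have h1 : φ ∘ ⇑C.symm = φ ∘ ⇑T := by rw [hTc]
    have h2 : fderiv ℝ (φ ∘ ⇑T) x = (fderiv ℝ φ (T x)).comp (fderiv ℝ T x) :=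
      fderiv_comp x (hφ.differentiable (by simp) _) (T.differentiableAt)
    rw [h1, h2, T.fderiv]
    simp [hTc]
  -- compute C.symm on basis vectors
  have hs0 : C.symm (Pi.single 0 1) = Pi.single 0 1 := by
    rw [LinearEquiv.symm_apply_eq]
    refine (funext <| Fin.cases ?_ ?_).symm
    · rw [hC0]
      simp [Pi.single_apply, Fin.succ_ne_zero]
    · intro i
      rw [hCi]
  have hsi : ∀ i : Fin d,
      C.symm (Pi.single i.succ 1) = Pi.single i.succ 1 - b i • (Pi.single 0 1 : Fin (d+1) → ℝ) := by
    intro i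
    rw [LinearEquiv.symm_apply_eq]
    refine (funext <| Fin.cases ?_ ?_).symm
    · rw [hC0]
      simp [Pi.single_apply, Fin.succ_ne_zero, (Fin.succ_ne_zero i).symm, Fin.succ_inj]
    · intro j
      rw [hCi]
      simp [Pi.single_apply, Fin.succ_ne_zero]
  set y := C.symm x
  set A := fderiv ℝ φ y (Pi.single 0 1) with hA
  have hD0 : fderiv ℝ (φ ∘ ⇑C.symm) x (Pi.single 0 1) = A := by
    rw [hchain, hs0]
  have hDi : ∀ i : Fin d, fderiv ℝ (φ ∘ ⇑C.symm) x (Pi.single i.succ 1)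
      = fderiv ℝ φ y (Pi.single i.succ 1) - b i * A := by
    intro i
    rw [hchain, hsi i, map_sub, map_smul, smul_eq_mul, hA]
  rw [hD0]
  simp only [hDi]
  have expand : ∀ p : Fin d → ℝ,
      ∑ i : Fin d, (p i - b i * A) ^ 2
        = (∑ i : Fin d, (p i) ^ 2) - 2 * A * (∑ i : Fin d, b i * p i)
            + A ^ 2 * (∑ i : Fin d, (b i) ^ 2) := by
    intro p
    rw [Finset.mul_sum, Finset.mul_sum, ← Finset.sum_sub_distrib, ← Finset.sum_add_distrib]
    exact Finset.sum_congr rfl fun i _ => by ring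
  rw [expand]
  ring
end
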